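/- arXiv:2602.06539 — 5 statements merged into one kernel-verified Lean document; each statement's English description precedes it below -/
import Mathlib

section
/- Let p > 1 and let x1, y1, x2, y2 be nonnegative reals satisfying the cyclical monotonicity inequality |x1 − y1|^p + |x2 − y2|^p ≤ |x1 − y2|^p + |x2 − y1|^p. If x1 < x2 then y1 ≤ y2. -/
/-!
Put `c = x1 - y1`, `e = x2 - y2`, `a = x1 - y2`, `b = x2 - y1`. If `y2 < y1` then `a` and `b`
lie strictly between `c` and `e` and `a + b = c + e`, so strict convexity of `t ↦ |t| ^ p`
gives `|a| ^ p + |b| ^ p < |c| ^ p + |e| ^ p`, contradicting the cyclical monotonicity inequality.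
-/

open Set

theorem StrictConvexOn.add_lt_add_of_lt_of_add_eq {𝕜 : Type*} [Field 𝕜] [LinearOrder 𝕜]
    [IsStrictOrderedRing 𝕜] {s : Set 𝕜} {f : 𝕜 → 𝕜} (hf : StrictConvexOn 𝕜 s f)
    {a b c e : 𝕜} (hc : c ∈ s) (he : e ∈ s) (hca : c < a) (hcb : c < b) (habce : a + b = c + e) :
    f a + f b < f c + f e := by
  have hce : c < e := by linarith
  set t := (e - a) / (e - c)
  have ht₀ : 0 < t := div_pos (by linarith) (sub_pos.mpr hce)
  have ht₁ : 0 < 1 - t := by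
    rw [sub_pos, div_lt_one (sub_pos.mpr hce)]
    linarith
  have ha : t • c + (1 - t) • e = a := by
    simp only [smul_eq_mul, t]
    field_simp
    ring
  have hb : (1 - t) • c + t • e = b := by
    simp only [smul_eq_mul, t]
    field_simp
    linear_combination (c - e) * habce
  have hfa := hf.2 hc he hce.ne ht₀ ht₁ (add_sub_cancel t 1)
  have hfb := hf.2 hc he hce.ne ht₁ ht₀ (sub_add_cancel 1 t)
  rw [ha] at hfa
  rw [hb] at hfb
  simp only [smul_eq_mul] at hfa hfb
  linarith

theorem strictConvexOn_abs_rpow {p : ℝ} (hp : 1 < p) :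
    StrictConvexOn ℝ univ fun x : ℝ ↦ |x| ^ p := by
  refine ⟨convex_univ, fun x _ y _ hxy a b ha hb hab ↦ ?_⟩
  simp only [smul_eq_mul]
  have hp₀ : 0 < p := zero_lt_one.trans hp
  have hpow : (a * |x| + b * |y|) ^ p ≤ a * |x| ^ p + b * |y| ^ p := by
    simpa using (convexOn_rpow hp.le).2 (abs_nonneg x) (abs_nonneg y) ha.le hb.le hab
  by_cases habs : |x| = |y|
  · -- `x` and `y` have opposite signs, so the triangle inequality is strict
    obtain rfl : x = -y := (abs_eq_abs.mp habs).resolve_left hxy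
    have hy : 0 < |y| := abs_pos.mpr fun h ↦ hxy (by simp [h])
    have htri : |a * -y + b * y| < a * |-y| + b * |y| := by
      rw [abs_neg, show a * -y + b * y = (b - a) * y by ring, abs_mul, ← add_mul]
      gcongr
      rw [abs_lt]
      constructor <;> linarith
    exact (Real.rpow_lt_rpow (abs_nonneg _) htri hp₀).trans_le hpow
  · have htri : |a * x + b * y| ≤ a * |x| + b * |y| := by
      simpa [abs_mul, abs_of_pos ha, abs_of_pos hb] using abs_add_le (a * x) (b * y)
    calc |a * x + b * y| ^ p ≤ (a * |x| + b * |y|) ^ p :=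
          Real.rpow_le_rpow (abs_nonneg _) htri hp₀.le
      _ < a * |x| ^ p + b * |y| ^ p := by
          simpa using (strictConvexOn_rpow hp).2 (abs_nonneg x) (abs_nonneg y) habs ha hb hab

theorem stmt2_general (p x1 y1 x2 y2 : ℝ) (hp : 1 < p)
    (hcm : |x1 - y1| ^ p + |x2 - y2| ^ p ≤ |x1 - y2| ^ p + |x2 - y1| ^ p)
    (hlt : x1 < x2) : y1 ≤ y2 := by
  by_contra! hy
  have := (strictConvexOn_abs_rpow hp).add_lt_add_of_lt_of_add_eq (mem_univ (x1 - y1))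
    (mem_univ (x2 - y2)) (a := x1 - y2) (b := x2 - y1) (by linarith) (by linarith) (by ring)
  linarith

/-- Monotonicity lemma for 1D optimal transport with cost `|x−y|^p`, `p > 1`:
if nonnegative reals satisfy the cyclical monotonicity inequality
`|x1 − y1|^p + |x2 − y2|^p ≤ |x1 − y2|^p + |x2 − y1|^p` and `x1 < x2`, then `y1 ≤ y2`.
(Here `^` denotes the real power `Real.rpow`.) -/
theorem stmt2 (p x1 y1 x2 y2 : ℝ) (hp : 1 < p)
    (hx1 : 0 ≤ x1) (hy1 : 0 ≤ y1) (hx2 : 0 ≤ x2) (hy2 : 0 ≤ y2)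
    (hcm : |x1 - y1| ^ p + |x2 - y2| ^ p ≤ |x1 - y2| ^ p + |x2 - y1| ^ p)
    (hlt : x1 < x2) : y1 ≤ y2 :=
  stmt2_general p x1 y1 x2 y2 hp hcm hlt
end

section
/- Let μ, ν be nonnegative Borel measures on (0,∞) with F_μ(x) = μ([x,∞)) < ∞ and F_ν(x) = ν([x,∞)) < ∞ for all x > 0, and let γ_mon = (F_μ⁻¹, F_ν⁻¹) # L¹([0,∞)) be the pushforward of Lebesgue measure under the pair of generalized inverses. Then for all a, b > 0, γ_mon([a,∞) × [b,∞)) = min(F_μ(a), F_ν(b)). -/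
/-!
For `a, m > 0` the generalized inverse satisfies the Galois-type equivalence
`a ≤ F_μ⁻¹(m) ↔ m ≤ F_μ(a)`: the supremum is finite because `F_μ(t) → 0` as `t → ∞`, and
the left continuity of `F_μ` lets the bound `m ≤ F_μ(t)` for `t < a` pass to `t = a`.
Hence the preimage of `[a,∞) × [b,∞)` under `(F_μ⁻¹, F_ν⁻¹)` is the interval
`(0, min(F_μ(a), F_ν(b))]`, whose Lebesgue measure is the claim.
-/

open MeasureTheory Set Filter Topology

/-- Generalized inverse of the reversed distribution function `x ↦ μ([x,∞))`,
with `sup ∅ = 0` (real supremum). -/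
noncomputable def Finv (μ : Measure ℝ) (m : ℝ) : ℝ :=
  sSup {t : ℝ | 0 ≤ t ∧ ENNReal.ofReal m ≤ μ (Set.Ici t)}

section

variable {μ : Measure ℝ}

theorem tendsto_measure_Ici_atTop (h : ∃ x, μ (Ici x) ≠ ⊤) :
    Tendsto (fun x => μ (Ici x)) atTop (𝓝 0) := by
  have hempty : ⋂ x : ℝ, Ici x = ∅ :=
    eq_empty_of_forall_notMem fun y hy => (lt_add_one y).not_ge (mem_iInter.1 hy (y + 1))
  have := tendsto_measure_iInter_atTop (fun _ => nullMeasurableSet_Ici) antitone_Ici h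
  rwa [hempty, measure_empty] at this

theorem tendsto_measure_Ici_nhdsLT {a : ℝ} (h : ∃ x < a, μ (Ici x) ≠ ⊤) :
    Tendsto (fun x => μ (Ici x)) (𝓝[<] a) (𝓝 (μ (Ici a))) := by
  have hinter : ⋂ x < a, Ici x = Ici a := by
    ext y
    simpa using forall_lt_imp_le_iff_le_of_dense
  -- continuity from above on `ℝᵒᵈ`, whose `𝓝[>] (toDual a)` is `𝓝[<] a` by definition
  have := tendsto_measure_biInter_gt (ι := ℝᵒᵈ) (s := fun r => Ici (OrderDual.ofDual r))
    (a := OrderDual.toDual a) (fun _ _ => nullMeasurableSet_Ici)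
    (fun _ _ _ hij => Ici_subset_Ici.2 hij) h
  rw [← hinter]
  exact this

theorem bddAbove_setOf_ofReal_le_measure_Ici (h : ∃ x, μ (Ici x) ≠ ⊤) {m : ℝ} (hm : 0 < m) :
    BddAbove {t : ℝ | 0 ≤ t ∧ ENNReal.ofReal m ≤ μ (Ici t)} := by
  obtain ⟨T, hT⟩ := ((tendsto_measure_Ici_atTop h).eventually
    (gt_mem_nhds (ENNReal.ofReal_pos.2 hm))).exists_forall_of_atTop
  exact ⟨T, fun t ht => le_of_not_ge fun hTt => (hT t hTt).not_ge ht.2⟩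

variable (μ) in
theorem Finv_nonneg (m : ℝ) : 0 ≤ Finv μ m :=
  Real.sSup_nonneg fun _ ht => ht.1

variable (μ) in
theorem Finv_of_nonpos {m : ℝ} (hm : m ≤ 0) : Finv μ m = 0 := by
  have hset : {t : ℝ | 0 ≤ t ∧ ENNReal.ofReal m ≤ μ (Ici t)} = Ici 0 := by
    ext t
    simp [ENNReal.ofReal_eq_zero.2 hm]
  rw [Finv, hset, Real.sSup_of_not_bddAbove (not_bddAbove_Ici 0)]

theorem le_Finv_iff {a m : ℝ} (hfin : ∃ x < a, μ (Ici x) ≠ ⊤) (ha : 0 < a) (hm : 0 < m) :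
    a ≤ Finv μ m ↔ ENNReal.ofReal m ≤ μ (Ici a) := by
  rw [Finv]
  set S := {t : ℝ | 0 ≤ t ∧ ENNReal.ofReal m ≤ μ (Ici t)}
  have hbdd : BddAbove S := bddAbove_setOf_ofReal_le_measure_Ici (hfin.imp fun _ hx => hx.2) hm
  refine ⟨fun h => ?_, fun h => le_csSup hbdd ⟨ha.le, h⟩⟩
  have hne : S.Nonempty := nonempty_iff_ne_empty.2 fun hS => by
    rw [hS, Real.sSup_empty] at h
    exact ha.not_ge h
  refine ge_of_tendsto (tendsto_measure_Ici_nhdsLT hfin) ?_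
  filter_upwards [self_mem_nhdsWithin] with t (ht : t < a)
  obtain ⟨s, hs, hts⟩ := exists_lt_of_lt_csSup hne (ht.trans_le h)
  exact hs.2.trans (measure_mono (Ici_subset_Ici.2 hts.le))

theorem Finv_preimage_Ici (hloc : ∀ x : ℝ, 0 < x → μ (Ici x) < ⊤) {a : ℝ} (ha : 0 < a) :
    Finv μ ⁻¹' Ici a = Ioc 0 (μ (Ici a)).toReal := by
  ext m
  rcases le_or_gt m 0 with hm | hm
  · simp [Finv_of_nonpos μ hm, ha.not_ge, hm.not_gt]
  · simp [hm, le_Finv_iff ⟨a / 2, half_lt_self ha, (hloc _ (half_pos ha)).ne⟩ ha hm,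
      ENNReal.ofReal_le_iff_le_toReal (hloc a ha).ne]

theorem measurable_Finv (hloc : ∀ x : ℝ, 0 < x → μ (Ici x) < ⊤) : Measurable (Finv μ) := by
  refine measurable_of_Ici fun a => ?_
  rcases le_or_gt a 0 with ha | ha
  · rw [show Finv μ ⁻¹' Ici a = univ from
      eq_univ_of_forall fun m => ha.trans (Finv_nonneg μ m)]
    exact MeasurableSet.univ
  · rw [Finv_preimage_Ici hloc ha]
    exact measurableSet_Ioc

end

theorem stmt6_general (μ ν : Measure ℝ)
    (hμloc : ∀ x : ℝ, 0 < x → μ (Set.Ici x) < ⊤)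
    (hνloc : ∀ x : ℝ, 0 < x → ν (Set.Ici x) < ⊤)
    (a b : ℝ) (ha : 0 < a) (hb : 0 < b) :
    Measure.map (fun m : ℝ => (Finv μ m, Finv ν m)) (volume.restrict (Set.Ici (0 : ℝ)))
        (Set.Ici a ×ˢ Set.Ici b) = min (μ (Set.Ici a)) (ν (Set.Ici b)) := by
  have hpre : (fun m => (Finv μ m, Finv ν m)) ⁻¹' (Ici a ×ˢ Ici b)
      = Ioc 0 (min (μ (Ici a)).toReal (ν (Ici b)).toReal) := by
    rw [mk_preimage_prod, Finv_preimage_Ici hμloc ha, Finv_preimage_Ici hνloc hb,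
      Ioc_inter_Ioc, max_self]
  rw [Measure.map_apply ((measurable_Finv hμloc).prodMk (measurable_Finv hνloc))
      (measurableSet_Ici.prod measurableSet_Ici), hpre,
    Measure.restrict_apply measurableSet_Ioc,
    inter_eq_left.2 (Ioc_subset_Ioi_self.trans Ioi_subset_Ici_self), Real.volume_Ioc, sub_zero,
    ENNReal.ofReal_min, ENNReal.ofReal_toReal (hμloc a ha).ne,
    ENNReal.ofReal_toReal (hνloc b hb).ne]

/-- Let `μ, ν` be nonnegative Borel measures on `(0,∞)` with `μ([x,∞)) < ∞` and
`ν([x,∞)) < ∞` for all `x > 0`, and let `γ_mon = (F_μ⁻¹, F_ν⁻¹) # L¹([0,∞))` be the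
monotone coupling, the pushforward of Lebesgue measure on `[0,∞)` under the pair of
generalized inverses.  Then for all `a, b > 0`,
`γ_mon([a,∞) × [b,∞)) = min(F_μ(a), F_ν(b))`. -/
theorem stmt6 (μ ν : Measure ℝ)
    (hμsupp : μ (Set.Iic 0) = 0) (hνsupp : ν (Set.Iic 0) = 0)
    (hμloc : ∀ x : ℝ, 0 < x → μ (Set.Ici x) < ⊤)
    (hνloc : ∀ x : ℝ, 0 < x → ν (Set.Ici x) < ⊤)
    (a b : ℝ) (ha : 0 < a) (hb : 0 < b) :
    Measure.map (fun m : ℝ => (Finv μ m, Finv ν m)) (volume.restrict (Set.Ici (0 : ℝ)))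
        (Set.Ici a ×ˢ Set.Ici b) = min (μ (Set.Ici a)) (ν (Set.Ici b)) :=
  stmt6_general μ ν hμloc hνloc a b ha hb
end

section
/- For p = 1, the Sliced Figalli–Gigli distance satisfies SFG₁(μ, ν) ≤ 3 · FG₁(μ, ν) for all persistence measures μ, ν ∈ M¹(Ω). -/
open MeasureTheory

/-- The open half-plane `Ω = {(b,d) : b < d}`. -/
def Omega : Set (ℝ × ℝ) := {z | z.1 < z.2}

/-- Admissible transport plans between two measures on `Ω`: Radon measures on
`Ω̄ × Ω̄` whose marginals restricted to Borel subsets of `Ω` are `μ` and `ν`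
(mass may go to and from the diagonal freely). -/
def Adm (μ ν : Measure (ℝ × ℝ)) : Set (Measure ((ℝ × ℝ) × (ℝ × ℝ))) :=
  {γ | (∀ A : Set (ℝ × ℝ), MeasurableSet A → A ⊆ Omega → γ (A ×ˢ Set.univ) = μ A) ∧
       (∀ B : Set (ℝ × ℝ), MeasurableSet B → B ⊆ Omega → γ (Set.univ ×ˢ B) = ν B) ∧
       γ {w : (ℝ × ℝ) × (ℝ × ℝ) | ¬ w.1.1 ≤ w.1.2 ∨ ¬ w.2.1 ≤ w.2.2} = 0}

/-- The transport cost `∬ d(x,y)^p dγ(x,y)` (Euclidean ground distance). -/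
noncomputable def FGcost (p : ℝ) (γ : Measure ((ℝ × ℝ) × (ℝ × ℝ))) : ENNReal :=
  ∫⁻ w, ENNReal.ofReal
    ((Real.sqrt ((w.1.1 - w.2.1) ^ 2 + (w.1.2 - w.2.2) ^ 2)) ^ p) ∂γ

/-- The Figalli–Gigli distance `FG_p(μ,ν) = (inf_{γ ∈ Adm(μ,ν)} ∬ d(x,y)^p dγ)^{1/p}`. -/
noncomputable def FG (p : ℝ) (μ ν : Measure (ℝ × ℝ)) : ENNReal :=
  (⨅ γ ∈ Adm μ ν, FGcost p γ) ^ (1 / p)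

/-- Projection onto the geodesic `G_t`: points of the strip `z1 ≤ t ≤ z2` project
orthogonally onto the line through `(t,t)` with direction `(−1,1)`, all other points
project onto the diagonal (here onto the diagonal point `(t,t)`). -/
noncomputable def projGeo (t : ℝ) (z : ℝ × ℝ) : ℝ × ℝ :=
  if z.1 ≤ t ∧ t ≤ z.2 then (t - (z.2 - z.1) / 2, t + (z.2 - z.1) / 2) else (t, t)

/-- The normalization `dμ̃(z) = dμ(z)/d(z,Δ)`, with `d(z,Δ) = (z2−z1)/√2`. -/
noncomputable def normalizePM (μ : Measure (ℝ × ℝ)) : Measure (ℝ × ℝ) :=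
  μ.withDensity fun z => ENNReal.ofReal (Real.sqrt 2 / (z.2 - z.1))

/-!
Fix a plan `γ` between `μ` and `ν` and a slice parameter `t`. A pair `(x, y)` of `γ` carries the
masses `√2/pₓ` and `√2/p_y` of `μ̃` and `ν̃` (where `p = z.2 - z.1`) onto the geodesic `G_t`
whenever `t` lies in the strips `[x.1, x.2]` and `[y.1, y.2]`; moving the common mass between the
two projections and the excess to the diagonal gives a plan between `π_t#μ̃` and `π_t#ν̃`. On the
common strip this costs `2|pₓ - p_y| / max pₓ p_y` per unit of `t`, and at most `1` on the
symmetric difference of the strips, so integrating in `t` costs at most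
`2|pₓ - p_y| + |x.1 - y.1| + |x.2 - y.2| ≤ 3√2 · d(x, y)`. Tonelli then gives
`∫ FG₁(π_t#μ̃, π_t#ν̃) dt ≤ 3√2 · cost(γ)`.
-/

open scoped ENNReal

noncomputable section

lemma ofReal_integral_toReal_le_lintegral {α : Type*} [MeasurableSpace α] (μ : Measure α)
    (f : α → ℝ≥0∞) : ENNReal.ofReal (∫ x, (f x).toReal ∂μ) ≤ ∫⁻ x, f x ∂μ :=
  calc ENNReal.ofReal (∫ x, (f x).toReal ∂μ) ≤ ‖∫ x, (f x).toReal ∂μ‖ₑ := Real.ofReal_le_enorm _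
    _ ≤ ∫⁻ x, ‖(f x).toReal‖ₑ ∂μ := enorm_integral_le_lintegral_enorm _
    _ ≤ ∫⁻ x, f x ∂μ := lintegral_mono fun x ↦ by
        rw [Real.enorm_of_nonneg ENNReal.toReal_nonneg]; exact ENNReal.ofReal_toReal_le

lemma map_withDensity_apply {α δ : Type*} [MeasurableSpace α] [MeasurableSpace δ]
    {μ : Measure α} {f : α → δ} {a : α → ℝ≥0∞} (hf : Measurable f) (ha : Measurable a)
    {A : Set δ} (hA : MeasurableSet A) :
    (μ.withDensity a).map f A = ∫⁻ z, a z * A.indicator 1 (f z) ∂μ := by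
  rw [← lintegral_indicator_one hA, lintegral_map (measurable_one.indicator hA) hf]
  exact lintegral_withDensity_eq_lintegral_mul _ ha ((measurable_one.indicator hA).comp hf)

def planeDist (u v : ℝ × ℝ) : ℝ := √((u.1 - v.1) ^ 2 + (u.2 - v.2) ^ 2)

@[fun_prop]
lemma Measurable.planeDist {α : Type*} [MeasurableSpace α] {f g : α → ℝ × ℝ}
    (hf : Measurable f) (hg : Measurable g) : Measurable fun x ↦ planeDist (f x) (g x) := by
  unfold _root_.planeDist; fun_prop

lemma planeDist_comm (u v : ℝ × ℝ) : planeDist u v = planeDist v u := by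
  unfold planeDist; ring_nf

lemma planeDist_geodesic (t p q : ℝ) :
    planeDist (t - p / 2, t + p / 2) (t - q / 2, t + q / 2) = |p - q| / √2 := by
  rw [planeDist, ← Real.sqrt_sq_eq_abs, ← Real.sqrt_div' _ (by norm_num)]
  congr 1; ring

lemma planeDist_geodesic_diag (t p : ℝ) : planeDist (t - p / 2, t + p / 2) (t, t) = |p| / √2 := by
  simpa using planeDist_geodesic t p 0

lemma abs_sub_add_abs_sub_le_sqrt_two_mul_planeDist (x y : ℝ × ℝ) :
    |x.1 - y.1| + |x.2 - y.2| ≤ √2 * planeDist x y := by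
  rw [planeDist, ← Real.sqrt_mul zero_le_two]
  apply Real.le_sqrt_of_sq_le
  nlinarith [sq_abs (x.1 - y.1), sq_abs (x.2 - y.2), sq_nonneg (|x.1 - y.1| - |x.2 - y.2|)]

lemma FGcost_one (γ : Measure ((ℝ × ℝ) × (ℝ × ℝ))) :
    FGcost 1 γ = ∫⁻ w, ENNReal.ofReal (planeDist w.1 w.2) ∂γ := by
  simp [FGcost, planeDist]

lemma FG_one (μ ν : Measure (ℝ × ℝ)) : FG 1 μ ν = ⨅ γ ∈ Adm μ ν, FGcost 1 γ := by
  simp [FG]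

lemma measurableSet_Omega : MeasurableSet Omega :=
  (isOpen_lt continuous_fst continuous_snd).measurableSet

lemma diag_notMem_Omega (t : ℝ) : (t, t) ∉ Omega := lt_irrefl t

lemma map_restrict_Omega_eq {X : Type*} [MeasurableSpace X] {γ : Measure X}
    {μ : Measure (ℝ × ℝ)} {p : X → ℝ × ℝ} (hp : Measurable p)
    (h : ∀ A, MeasurableSet A → A ⊆ Omega → γ (p ⁻¹' A) = μ A) :
    (γ.map p).restrict Omega = μ.restrict Omega := by
  ext A hA
  rw [Measure.restrict_apply hA, Measure.restrict_apply hA, Measure.map_apply hp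
    (hA.inter measurableSet_Omega), h _ (hA.inter measurableSet_Omega) Set.inter_subset_right]

lemma lintegral_comp_eq_of_map_restrict_Omega {X : Type*} [MeasurableSpace X] {γ : Measure X}
    {μ : Measure (ℝ × ℝ)} {p : X → ℝ × ℝ} (hp : Measurable p)
    (h : (γ.map p).restrict Omega = μ.restrict Omega) {g : ℝ × ℝ → ℝ≥0∞} (hg : Measurable g)
    (hg0 : ∀ z ∉ Omega, g z = 0) : ∫⁻ x, g (p x) ∂γ = ∫⁻ z, g z ∂μ := by
  have hsupp : Function.support g ⊆ Omega := fun z hz ↦ by_contra fun h ↦ hz (hg0 z h)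
  rw [← lintegral_map hg hp, ← setLIntegral_eq_of_support_subset hsupp, h,
    setLIntegral_eq_of_support_subset hsupp]

lemma map_fst_restrict_Omega_of_mem_Adm {μ ν : Measure (ℝ × ℝ)} {γ : Measure ((ℝ × ℝ) × (ℝ × ℝ))}
    (hγ : γ ∈ Adm μ ν) : (γ.map Prod.fst).restrict Omega = μ.restrict Omega :=
  map_restrict_Omega_eq measurable_fst fun A hA hAΩ ↦ by
    rw [← Set.prod_univ]; exact hγ.1 A hA hAΩ

lemma map_snd_restrict_Omega_of_mem_Adm {μ ν : Measure (ℝ × ℝ)} {γ : Measure ((ℝ × ℝ) × (ℝ × ℝ))}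
    (hγ : γ ∈ Adm μ ν) : (γ.map Prod.snd).restrict Omega = ν.restrict Omega :=
  map_restrict_Omega_eq measurable_snd fun B hB hBΩ ↦ by
    rw [← Set.univ_prod]; exact hγ.2.1 B hB hBΩ

lemma Adm_congr {μ μ' ν ν' : Measure (ℝ × ℝ)}
    (hμ : ∀ A, MeasurableSet A → A ⊆ Omega → μ A = μ' A)
    (hν : ∀ B, MeasurableSet B → B ⊆ Omega → ν B = ν' B) : Adm μ ν = Adm μ' ν' := by
  ext γ
  refine and_congr (forall₃_congr fun A hA hAΩ ↦ ?_)
    (and_congr (forall₃_congr fun B hB hBΩ ↦ ?_) .rfl)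
  · rw [hμ A hA hAΩ]
  · rw [hν B hB hBΩ]

section SplitPlan

variable {α β δ : Type*} [MeasurableSpace α] [MeasurableSpace β] [MeasurableSpace δ]

-- Along `γ`, the common mass `min (a x) (b y)` goes from `f x` to `g y`; the excess of `a`
-- is sent to `c` and the excess of `b` is brought from `c`.
def splitPlan (f : α → δ) (g : β → δ) (a : α → ℝ≥0∞) (b : β → ℝ≥0∞) (c : δ)
    (γ : Measure (α × β)) : Measure (δ × δ) :=
  (γ.withDensity fun w ↦ min (a w.1) (b w.2)).map (fun w ↦ (f w.1, g w.2))
  + (γ.withDensity fun w ↦ a w.1 - min (a w.1) (b w.2)).map (fun w ↦ (f w.1, c))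
  + (γ.withDensity fun w ↦ b w.2 - min (a w.1) (b w.2)).map (fun w ↦ (c, g w.2))

variable {f : α → δ} {g : β → δ} {a : α → ℝ≥0∞} {b : β → ℝ≥0∞} {c : δ} {γ : Measure (α × β)}

lemma lintegral_splitPlan (hf : Measurable f) (hg : Measurable g) (ha : Measurable a)
    (hb : Measurable b) {Φ : δ × δ → ℝ≥0∞} (hΦ : Measurable Φ) :
    ∫⁻ w, Φ w ∂splitPlan f g a b c γ =
      ∫⁻ w, (min (a w.1) (b w.2) * Φ (f w.1, g w.2)
        + (a w.1 - min (a w.1) (b w.2)) * Φ (f w.1, c)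
        + (b w.2 - min (a w.1) (b w.2)) * Φ (c, g w.2)) ∂γ := by
  rw [splitPlan, lintegral_add_measure, lintegral_add_measure,
    lintegral_map hΦ (by fun_prop), lintegral_map hΦ (by fun_prop), lintegral_map hΦ (by fun_prop),
    lintegral_withDensity_eq_lintegral_mul _ (by fun_prop) (by fun_prop),
    lintegral_withDensity_eq_lintegral_mul _ (by fun_prop) (by fun_prop),
    lintegral_withDensity_eq_lintegral_mul _ (by fun_prop) (by fun_prop),
    ← lintegral_add_left (by fun_prop), ← lintegral_add_left (by fun_prop)]
  rfl

end SplitPlan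

lemma splitPlan_mem_Adm {μ ν : Measure (ℝ × ℝ)} {γ : Measure ((ℝ × ℝ) × (ℝ × ℝ))}
    (hγ : γ ∈ Adm μ ν) {f g : ℝ × ℝ → ℝ × ℝ} {a b : ℝ × ℝ → ℝ≥0∞} {c : ℝ × ℝ}
    (hf : Measurable f) (hg : Measurable g) (ha : Measurable a) (hb : Measurable b)
    (ha0 : ∀ z ∉ Omega, a z = 0) (hb0 : ∀ z ∉ Omega, b z = 0)
    (hf_le : ∀ z, (f z).1 ≤ (f z).2) (hg_le : ∀ z, (g z).1 ≤ (g z).2) (hc : c.1 = c.2) :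
    splitPlan f g a b c γ ∈ Adm ((μ.withDensity a).map f) ((ν.withDensity b).map g) := by
  have hcΩ : c ∉ Omega := fun h ↦ (ne_of_lt h) hc
  refine ⟨fun A hA hAΩ ↦ ?_, fun B hB hBΩ ↦ ?_, ?_⟩
  · have hcA : c ∉ A := fun h ↦ hcΩ (hAΩ h)
    rw [← lintegral_indicator_one (hA.prod .univ), lintegral_splitPlan hf hg ha hb
      (measurable_one.indicator (hA.prod .univ)), map_withDensity_apply hf ha hA,
      ← lintegral_comp_eq_of_map_restrict_Omega (g := fun z ↦ a z * A.indicator 1 (f z))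
        measurable_fst (map_fst_restrict_Omega_of_mem_Adm hγ)
        (ha.mul ((measurable_one.indicator hA).comp hf)) fun z hz ↦ by simp [ha0 z hz]]
    refine lintegral_congr fun w ↦ ?_
    simp only [Set.indicator_prod_one, Set.indicator_of_notMem hcA, Set.indicator_univ,
      Pi.one_apply, mul_one, mul_zero, add_zero, ← add_mul, add_tsub_cancel_of_le (min_le_left _ _)]
  · have hcB : c ∉ B := fun h ↦ hcΩ (hBΩ h)
    rw [← lintegral_indicator_one (MeasurableSet.univ.prod hB), lintegral_splitPlan hf hg ha hb
      (measurable_one.indicator (MeasurableSet.univ.prod hB)), map_withDensity_apply hg hb hB,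
      ← lintegral_comp_eq_of_map_restrict_Omega (g := fun z ↦ b z * B.indicator 1 (g z))
        measurable_snd (map_snd_restrict_Omega_of_mem_Adm hγ)
        (hb.mul ((measurable_one.indicator hB).comp hg)) fun z hz ↦ by simp [hb0 z hz]]
    refine lintegral_congr fun w ↦ ?_
    simp only [Set.indicator_prod_one, Set.indicator_of_notMem hcB, Set.indicator_univ,
      Pi.one_apply, one_mul, mul_zero, add_zero, ← add_mul,
      add_tsub_cancel_of_le (min_le_right _ _)]
  · have hS : MeasurableSet {w : (ℝ × ℝ) × (ℝ × ℝ) | ¬ w.1.1 ≤ w.1.2 ∨ ¬ w.2.1 ≤ w.2.2} := by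
      measurability
    rw [← lintegral_indicator_one hS, lintegral_splitPlan hf hg ha hb (measurable_one.indicator hS)]
    simp [Set.indicator_of_notMem, hf_le, hg_le, hc]

def stripPers (t : ℝ) (z : ℝ × ℝ) : ℝ := if z.1 ≤ t ∧ t ≤ z.2 then z.2 - z.1 else 0

lemma stripPers_nonneg (t : ℝ) (z : ℝ × ℝ) : 0 ≤ stripPers t z := by
  unfold stripPers
  split_ifs with h
  · exact sub_nonneg.2 (h.1.trans h.2)
  · exact le_rfl

lemma measurable_stripPers_uncurry : Measurable fun p : ℝ × (ℝ × ℝ) ↦ stripPers p.1 p.2 := by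
  refine Measurable.ite ?_ (by fun_prop) (by fun_prop)
  exact (measurableSet_le measurable_snd.fst measurable_fst).inter
    (measurableSet_le measurable_fst measurable_snd.snd)

@[fun_prop]
lemma measurable_stripPers (t : ℝ) : Measurable (stripPers t) :=
  measurable_stripPers_uncurry.comp (measurable_const.prodMk measurable_id)

lemma stripPers_eq_zero_of_notMem_Omega (t : ℝ) {z : ℝ × ℝ} (hz : z ∉ Omega) :
    stripPers t z = 0 := by
  unfold stripPers Omega at *; split_ifs with h <;> simp at hz ⊢; linarith [h.1.trans h.2]

lemma projGeo_eq (t : ℝ) (z : ℝ × ℝ) :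
    projGeo t z = (t - stripPers t z / 2, t + stripPers t z / 2) := by
  unfold projGeo stripPers; split_ifs <;> simp

lemma measurable_projGeo (t : ℝ) : Measurable (projGeo t) := by
  simp_rw [funext (projGeo_eq t)]; fun_prop

-- `√2 / 0 = 0` makes this vanish off the strip `z.1 ≤ t ≤ z.2` and on the diagonal.
def sliceDensity (t : ℝ) (z : ℝ × ℝ) : ℝ≥0∞ := ENNReal.ofReal (√2 / stripPers t z)

lemma sliceDensity_eq_zero_of_notMem_Omega (t : ℝ) {z : ℝ × ℝ} (hz : z ∉ Omega) :
    sliceDensity t z = 0 := by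
  simp [sliceDensity, stripPers_eq_zero_of_notMem_Omega t hz]

lemma map_withDensity_sliceDensity_apply (μ : Measure (ℝ × ℝ)) (t : ℝ) (A : Set (ℝ × ℝ))
    (hA : MeasurableSet A) (hAΩ : A ⊆ Omega) :
    (μ.withDensity (sliceDensity t)).map (projGeo t) A = (normalizePM μ).map (projGeo t) A := by
  rw [Measure.map_apply (measurable_projGeo t) hA, Measure.map_apply (measurable_projGeo t) hA,
    normalizePM, withDensity_apply _ (measurable_projGeo t hA),
    withDensity_apply _ (measurable_projGeo t hA)]
  refine setLIntegral_congr_fun (measurable_projGeo t hA) fun z hz ↦ ?_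
  have hstrip : z.1 ≤ t ∧ t ≤ z.2 := by
    by_contra h
    exact diag_notMem_Omega t (by simpa [projGeo, h] using hAΩ hz)
  simp [sliceDensity, stripPers, hstrip]

def slicePlan (t : ℝ) (γ : Measure ((ℝ × ℝ) × (ℝ × ℝ))) : Measure ((ℝ × ℝ) × (ℝ × ℝ)) :=
  splitPlan (projGeo t) (projGeo t) (sliceDensity t) (sliceDensity t) (t, t) γ

lemma slicePlan_mem_Adm {μ ν : Measure (ℝ × ℝ)} {γ : Measure ((ℝ × ℝ) × (ℝ × ℝ))}
    (hγ : γ ∈ Adm μ ν) (t : ℝ) :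
    slicePlan t γ ∈ Adm ((normalizePM μ).map (projGeo t)) ((normalizePM ν).map (projGeo t)) := by
  have hdens : Measurable (sliceDensity t) := by unfold sliceDensity; fun_prop
  have hle : ∀ z, (projGeo t z).1 ≤ (projGeo t z).2 := fun z ↦ by
    rw [projGeo_eq]; linarith [stripPers_nonneg t z]
  rw [← Adm_congr (map_withDensity_sliceDensity_apply μ t) (map_withDensity_sliceDensity_apply ν t)]
  exact splitPlan_mem_Adm hγ (measurable_projGeo t) (measurable_projGeo t) hdens hdens
    (fun _ ↦ sliceDensity_eq_zero_of_notMem_Omega t)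
    (fun _ ↦ sliceDensity_eq_zero_of_notMem_Omega t) hle hle rfl

-- Cost per unit of `t` of `slicePlan t` at a pair of points with slice persistences `p` and `q`:
-- the common density `min` travels between the two projections, each excess to the diagonal.
def slicedCost (p q : ℝ) : ℝ :=
  min (√2 / p) (√2 / q) * (|p - q| / √2) + (√2 / p - min (√2 / p) (√2 / q)) * (|p| / √2)
    + (√2 / q - min (√2 / p) (√2 / q)) * (|q| / √2)

lemma measurable_slicedCost : Measurable fun p : ℝ × ℝ ↦ slicedCost p.1 p.2 := by
  unfold slicedCost; fun_prop

lemma FGcost_slicePlan (t : ℝ) (γ : Measure ((ℝ × ℝ) × (ℝ × ℝ))) :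
    FGcost 1 (slicePlan t γ) =
      ∫⁻ w, ENNReal.ofReal (slicedCost (stripPers t w.1) (stripPers t w.2)) ∂γ := by
  rw [FGcost_one, slicePlan, lintegral_splitPlan (measurable_projGeo t) (measurable_projGeo t)
    (by unfold sliceDensity; fun_prop) (by unfold sliceDensity; fun_prop) (by fun_prop)]
  refine lintegral_congr fun w ↦ ?_
  have hp := div_nonneg (Real.sqrt_nonneg 2) (stripPers_nonneg t w.1)
  have hq := div_nonneg (Real.sqrt_nonneg 2) (stripPers_nonneg t w.2)
  have hmin := le_min hp hq
  have hex₁ := sub_nonneg.2 (min_le_left (√2 / stripPers t w.1) (√2 / stripPers t w.2))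
  have hex₂ := sub_nonneg.2 (min_le_right (√2 / stripPers t w.1) (√2 / stripPers t w.2))
  simp only [projGeo_eq, planeDist_geodesic, planeDist_geodesic_diag, planeDist_comm (t, t),
    sliceDensity, ← ENNReal.ofReal_min, ← ENNReal.ofReal_sub _ hmin]
  rw [← ENNReal.ofReal_mul hmin, ← ENNReal.ofReal_mul hex₁, ← ENNReal.ofReal_mul hex₂,
    ← ENNReal.ofReal_add (by positivity) (mul_nonneg hex₁ (by positivity)),
    ← ENNReal.ofReal_add (add_nonneg (by positivity) (mul_nonneg hex₁ (by positivity)))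
      (mul_nonneg hex₂ (by positivity))]
  rfl

lemma slicedCost_comm (p q : ℝ) : slicedCost p q = slicedCost q p := by
  unfold slicedCost; rw [min_comm, abs_sub_comm]; ring

lemma slicedCost_zero_left {q : ℝ} (hq : 0 ≤ q) : slicedCost 0 q ≤ 1 := by
  have hmin : min (√2 / 0) (√2 / q) = 0 := by
    rw [div_zero]; exact min_eq_left (by positivity)
  rw [slicedCost, hmin, div_zero, abs_of_nonneg hq]
  rcases hq.eq_or_lt with rfl | hq'
  · simp
  · field_simp; simp

lemma slicedCost_le {p q : ℝ} (hp : 0 ≤ p) (hq : 0 ≤ q) :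
    slicedCost p q ≤ 2 * |p - q| / max p q := by
  wlog hpq : p ≤ q generalizing p q
  · rw [slicedCost_comm, abs_sub_comm, max_comm]; exact this hq hp (le_of_not_ge hpq)
  rcases hp.eq_or_lt with rfl | hp'
  · rcases hq.eq_or_lt with rfl | hq'
    · simp [slicedCost]
    · calc slicedCost 0 q ≤ 1 := slicedCost_zero_left hq
        _ ≤ 2 * |0 - q| / max 0 q := by
          rw [max_eq_right hq, zero_sub, abs_neg, abs_of_pos hq', mul_div_assoc, div_self hq'.ne']
          norm_num
  · have hq' : 0 < q := hp'.trans_le hpq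
    have hmin : min (√2 / p) (√2 / q) = √2 / q :=
      min_eq_right (div_le_div_of_nonneg_left (Real.sqrt_nonneg 2) hp' hpq)
    rw [slicedCost, hmin, abs_of_nonpos (sub_nonpos.2 hpq), abs_of_pos hp', abs_of_pos hq',
      max_eq_right hpq]
    apply le_of_eq
    field_simp
    ring

lemma volume_Icc_symmDiff_Icc_le (a b c d : ℝ) :
    volume (symmDiff (Set.Icc a b) (Set.Icc c d)) ≤
      ENNReal.ofReal |a - c| + ENNReal.ofReal |b - d| := by
  have hsub : symmDiff (Set.Icc a b) (Set.Icc c d) ⊆ Set.uIcc a c ∪ Set.uIcc b d := by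
    intro t ht
    simp only [Set.mem_symmDiff, Set.mem_Icc, Set.mem_union, Set.mem_uIcc] at ht ⊢
    grind
  calc volume (symmDiff (Set.Icc a b) (Set.Icc c d)) ≤ volume (Set.uIcc a c ∪ Set.uIcc b d) :=
        measure_mono hsub
    _ ≤ _ := (measure_union_le _ _).trans_eq <| by
        rw [Real.volume_interval, Real.volume_interval, abs_sub_comm c, abs_sub_comm d]

lemma ofReal_slicedCost_le_indicator {x y : ℝ × ℝ} (hx : x.1 ≤ x.2) (hy : y.1 ≤ y.2) (t : ℝ) :
    ENNReal.ofReal (slicedCost (stripPers t x) (stripPers t y)) ≤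
      (Set.Icc x.1 x.2 ∩ Set.Icc y.1 y.2).indicator (fun _ ↦ ENNReal.ofReal
        (2 * |(x.2 - x.1) - (y.2 - y.1)| / max (x.2 - x.1) (y.2 - y.1))) t
      + (symmDiff (Set.Icc x.1 x.2) (Set.Icc y.1 y.2)).indicator 1 t := by
  have hpx : 0 ≤ x.2 - x.1 := sub_nonneg.2 hx
  have hpy : 0 ≤ y.2 - y.1 := sub_nonneg.2 hy
  by_cases htx : t ∈ Set.Icc x.1 x.2 <;> by_cases hty : t ∈ Set.Icc y.1 y.2 <;>
    simp only [Set.mem_Icc] at htx hty <;>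
    simp only [stripPers, htx, hty, Set.mem_inter_iff, Set.mem_symmDiff, Set.mem_Icc,
      Set.indicator_of_mem, Set.indicator_of_notMem,
      Pi.one_apply, add_zero, zero_add, and_self, not_true_eq_false, and_false,
      or_false, false_or, not_false_eq_true, and_true, if_true, if_false]
  · exact ENNReal.ofReal_le_ofReal (slicedCost_le hpx hpy)
  · exact ENNReal.ofReal_le_one.2 (slicedCost_comm _ _ ▸ slicedCost_zero_left hpx)
  · exact ENNReal.ofReal_le_one.2 (slicedCost_zero_left hpy)
  · simp [slicedCost]

lemma lintegral_ofReal_slicedCost_le {x y : ℝ × ℝ} (hx : x.1 ≤ x.2) (hy : y.1 ≤ y.2) :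
    ∫⁻ t, ENNReal.ofReal (slicedCost (stripPers t x) (stripPers t y)) ≤
      ENNReal.ofReal (3 * √2 * planeDist x y) := by
  have hΔ : |(x.2 - x.1) - (y.2 - y.1)| ≤ |x.1 - y.1| + |x.2 - y.2| := by
    rw [show (x.2 - x.1) - (y.2 - y.1) = (x.2 - y.2) - (x.1 - y.1) by ring, add_comm]
    exact abs_sub _ _
  set Δ := |(x.2 - x.1) - (y.2 - y.1)|
  set M := max (x.2 - x.1) (y.2 - y.1)
  have hoverlap : ENNReal.ofReal (2 * Δ / M) * volume (Set.Icc x.1 x.2 ∩ Set.Icc y.1 y.2) ≤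
      ENNReal.ofReal (2 * Δ) := by
    have hvol : volume (Set.Icc x.1 x.2 ∩ Set.Icc y.1 y.2) ≤ ENNReal.ofReal M := by
      refine (measure_mono Set.inter_subset_left).trans ?_
      rw [Real.volume_Icc]
      exact ENNReal.ofReal_le_ofReal (le_max_left _ _)
    refine (mul_le_mul_right hvol _).trans ?_
    rw [← ENNReal.ofReal_mul (by positivity)]
    refine ENNReal.ofReal_le_ofReal ?_
    by_cases hM : M = 0
    · simp [hM]; positivity
    · rw [div_mul_cancel₀ _ hM]
  calc ∫⁻ t, ENNReal.ofReal (slicedCost (stripPers t x) (stripPers t y))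
      ≤ ∫⁻ t, ((Set.Icc x.1 x.2 ∩ Set.Icc y.1 y.2).indicator (fun _ ↦ ENNReal.ofReal (2 * Δ / M)) t
          + (symmDiff (Set.Icc x.1 x.2) (Set.Icc y.1 y.2)).indicator 1 t) :=
        lintegral_mono (ofReal_slicedCost_le_indicator hx hy)
    _ = ENNReal.ofReal (2 * Δ / M) * volume (Set.Icc x.1 x.2 ∩ Set.Icc y.1 y.2)
          + volume (symmDiff (Set.Icc x.1 x.2) (Set.Icc y.1 y.2)) := by
        rw [lintegral_add_left
            (measurable_const.indicator (measurableSet_Icc.inter measurableSet_Icc)),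
          lintegral_indicator_const (measurableSet_Icc.inter measurableSet_Icc),
          lintegral_indicator_one (measurableSet_Icc.symmDiff measurableSet_Icc)]
    _ ≤ ENNReal.ofReal (2 * Δ) + (ENNReal.ofReal |x.1 - y.1| + ENNReal.ofReal |x.2 - y.2|) :=
        add_le_add hoverlap (volume_Icc_symmDiff_Icc_le _ _ _ _)
    _ ≤ ENNReal.ofReal (3 * √2 * planeDist x y) := by
        rw [← ENNReal.ofReal_add (by positivity) (by positivity),
          ← ENNReal.ofReal_add (by positivity) (by positivity)]
        refine ENNReal.ofReal_le_ofReal ?_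
        linarith [abs_sub_add_abs_sub_le_sqrt_two_mul_planeDist x y]

-- `μ.restrict Omega` is the finite measure with density `d` reweighted by the finite density `d⁻¹`.
lemma sigmaFinite_restrict_Omega {μ : Measure (ℝ × ℝ)}
    (hμ : ∫⁻ z, ENNReal.ofReal ((z.2 - z.1) / √2) ∂μ < ⊤) : SigmaFinite (μ.restrict Omega) := by
  set d : ℝ × ℝ → ℝ≥0∞ := fun z ↦ ENNReal.ofReal ((z.2 - z.1) / √2)
  have hpos : ∀ᵐ z ∂μ.restrict Omega, d z ≠ 0 :=
    (ae_restrict_mem measurableSet_Omega).mono fun z hz ↦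
      (ENNReal.ofReal_pos.2 (div_pos (sub_pos.2 hz) (by positivity))).ne'
  have : IsFiniteMeasure ((μ.restrict Omega).withDensity d) :=
    isFiniteMeasure_withDensity ((setLIntegral_le_lintegral _ _).trans_lt hμ).ne
  rw [← withDensity_inv_same (by fun_prop) hpos (ae_of_all _ fun _ ↦ ENNReal.ofReal_ne_top)]
  exact SigmaFinite.withDensity_of_ne_top ((withDensity_absolutelyContinuous _ _).ae_le
    (hpos.mono fun _ hz ↦ ENNReal.inv_ne_top.2 hz))

lemma sigmaFinite_restrict_of_mem_Adm {μ ν : Measure (ℝ × ℝ)}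
    {γ : Measure ((ℝ × ℝ) × (ℝ × ℝ))} (hγ : γ ∈ Adm μ ν)
    (hμ : ∫⁻ z, ENNReal.ofReal ((z.2 - z.1) / √2) ∂μ < ⊤)
    (hν : ∫⁻ z, ENNReal.ofReal ((z.2 - z.1) / √2) ∂ν < ⊤) :
    SigmaFinite (γ.restrict (Prod.fst ⁻¹' Omega ∪ Prod.snd ⁻¹' Omega)) := by
  have : SigmaFinite (γ.restrict (Prod.fst ⁻¹' Omega)) := by
    refine SigmaFinite.of_map _ measurable_fst.aemeasurable ?_
    rw [← Measure.restrict_map measurable_fst measurableSet_Omega,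
      map_fst_restrict_Omega_of_mem_Adm hγ]
    exact sigmaFinite_restrict_Omega hμ
  have : SigmaFinite (γ.restrict (Prod.snd ⁻¹' Omega)) := by
    refine SigmaFinite.of_map _ measurable_snd.aemeasurable ?_
    rw [← Measure.restrict_map measurable_snd measurableSet_Omega,
      map_snd_restrict_Omega_of_mem_Adm hγ]
    exact sigmaFinite_restrict_Omega hν
  exact Measure.sigmaFinite_of_le _ (Measure.restrict_union_le _ _)

lemma FG_slice_le_lintegral_slicedCost {μ ν : Measure (ℝ × ℝ)} {γ : Measure ((ℝ × ℝ) × (ℝ × ℝ))}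
    (hγ : γ ∈ Adm μ ν) (t : ℝ) :
    FG 1 ((normalizePM μ).map (projGeo t)) ((normalizePM ν).map (projGeo t)) ≤
      ∫⁻ w, ENNReal.ofReal (slicedCost (stripPers t w.1) (stripPers t w.2)) ∂γ := by
  rw [FG_one, ← FGcost_slicePlan]
  exact iInf₂_le _ (slicePlan_mem_Adm hγ t)

-- Tonelli needs a σ-finite plan; the slice costs vanish where both points lie off `Ω`, and
-- the rest of any admissible plan is σ-finite because `μ` and `ν` have finite persistence.
lemma lintegral_FG_slice_le_FGcost {μ ν : Measure (ℝ × ℝ)} {γ : Measure ((ℝ × ℝ) × (ℝ × ℝ))}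
    (hγ : γ ∈ Adm μ ν) (hμ : ∫⁻ z, ENNReal.ofReal ((z.2 - z.1) / √2) ∂μ < ⊤)
    (hν : ∫⁻ z, ENNReal.ofReal ((z.2 - z.1) / √2) ∂ν < ⊤) :
    ∫⁻ t, FG 1 ((normalizePM μ).map (projGeo t)) ((normalizePM ν).map (projGeo t)) ≤
      ENNReal.ofReal (3 * √2) * FGcost 1 γ := by
  set T := Prod.fst ⁻¹' Omega ∪ Prod.snd ⁻¹' Omega
  have := sigmaFinite_restrict_of_mem_Adm hγ hμ hν
  set c : ℝ → (ℝ × ℝ) × (ℝ × ℝ) → ℝ≥0∞ :=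
    fun t w ↦ ENNReal.ofReal (slicedCost (stripPers t w.1) (stripPers t w.2))
  have hc : Measurable (Function.uncurry c) := by
    refine (measurable_slicedCost.comp (Measurable.prodMk ?_ ?_)).ennreal_ofReal
    · exact measurable_stripPers_uncurry.comp (measurable_fst.prodMk measurable_snd.fst)
    · exact measurable_stripPers_uncurry.comp (measurable_fst.prodMk measurable_snd.snd)
  have hT : ∀ t, ∫⁻ w in T, c t w ∂γ = ∫⁻ w, c t w ∂γ := fun t ↦
    setLIntegral_eq_of_support_subset fun w hw ↦ by
      by_contra hwT
      simp only [T, Set.mem_union, Set.mem_preimage, not_or] at hwT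
      simp [c, stripPers_eq_zero_of_notMem_Omega t hwT.1, stripPers_eq_zero_of_notMem_Omega t hwT.2,
        slicedCost] at hw
  have hclosed : ∀ᵐ w ∂γ.restrict T, w.1.1 ≤ w.1.2 ∧ w.2.1 ≤ w.2.2 := by
    refine ae_restrict_of_ae ?_
    rw [ae_iff]
    simpa only [not_and_or] using hγ.2.2
  calc ∫⁻ t, FG 1 ((normalizePM μ).map (projGeo t)) ((normalizePM ν).map (projGeo t))
      ≤ ∫⁻ t, ∫⁻ w in T, c t w ∂γ :=
        lintegral_mono fun t ↦ (FG_slice_le_lintegral_slicedCost hγ t).trans_eq (hT t).symm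
    _ = ∫⁻ w in T, (∫⁻ t, c t w) ∂γ := lintegral_lintegral_swap hc.aemeasurable
    _ ≤ ∫⁻ w in T, ENNReal.ofReal (3 * √2) * ENNReal.ofReal (planeDist w.1 w.2) ∂γ :=
        lintegral_mono_ae <| hclosed.mono fun w hw ↦
          (lintegral_ofReal_slicedCost_le hw.1 hw.2).trans_eq (ENNReal.ofReal_mul (by positivity))
    _ ≤ ENNReal.ofReal (3 * √2) * FGcost 1 γ := by
        rw [lintegral_const_mul _ (by fun_prop), FGcost_one]
        gcongr
        exact Measure.restrict_le_self

lemma lintegral_FG_slice_le {μ ν : Measure (ℝ × ℝ)}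
    (hμ : ∫⁻ z, ENNReal.ofReal ((z.2 - z.1) / √2) ∂μ < ⊤)
    (hν : ∫⁻ z, ENNReal.ofReal ((z.2 - z.1) / √2) ∂ν < ⊤) :
    ∫⁻ t, FG 1 ((normalizePM μ).map (projGeo t)) ((normalizePM ν).map (projGeo t)) ≤
      ENNReal.ofReal (3 * √2) * FG 1 μ ν := by
  have h₀ : ENNReal.ofReal (3 * √2) ≠ 0 := (ENNReal.ofReal_pos.2 (by positivity)).ne'
  rw [FG_one, ENNReal.mul_iInf_of_ne h₀ ENNReal.ofReal_ne_top]
  refine le_iInf fun γ ↦ ?_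
  rw [ENNReal.mul_iInf_of_ne h₀ ENNReal.ofReal_ne_top]
  exact le_iInf fun hγ ↦ lintegral_FG_slice_le_FGcost hγ hμ hν

def diagProj (z : ℝ × ℝ) : ℝ × ℝ := ((z.1 + z.2) / 2, (z.1 + z.2) / 2)

lemma planeDist_diagProj (z : ℝ × ℝ) : planeDist z (diagProj z) = |z.2 - z.1| / √2 := by
  rw [planeDist, diagProj, ← Real.sqrt_sq_eq_abs, ← Real.sqrt_div' _ (by norm_num)]
  congr 1; ring

@[fun_prop]
lemma measurable_diagProj : Measurable diagProj := by unfold diagProj; fun_prop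

def diagPlan (μ ν : Measure (ℝ × ℝ)) : Measure ((ℝ × ℝ) × (ℝ × ℝ)) :=
  (μ.restrict Omega).map (fun z ↦ (z, diagProj z))
    + (ν.restrict Omega).map (fun z ↦ (diagProj z, z))

lemma diagPlan_mem_Adm (μ ν : Measure (ℝ × ℝ)) : diagPlan μ ν ∈ Adm μ ν := by
  have hproj : ∀ z, diagProj z ∉ Omega := fun z ↦ diag_notMem_Omega _
  refine ⟨fun A hA hAΩ ↦ ?_, fun B hB hBΩ ↦ ?_, ?_⟩
  · have hempty : diagProj ⁻¹' A = ∅ :=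
      Set.eq_empty_of_forall_notMem fun z hz ↦ hproj z (hAΩ hz)
    rw [diagPlan, Measure.add_apply, Measure.map_apply (by fun_prop) (hA.prod .univ),
      Measure.map_apply (by fun_prop) (hA.prod .univ)]
    simp [Set.mk_preimage_prod, hempty, Measure.restrict_eq_self _ hAΩ]
  · have hempty : diagProj ⁻¹' B = ∅ :=
      Set.eq_empty_of_forall_notMem fun z hz ↦ hproj z (hBΩ hz)
    rw [diagPlan, Measure.add_apply, Measure.map_apply (by fun_prop) (MeasurableSet.univ.prod hB),
      Measure.map_apply (by fun_prop) (MeasurableSet.univ.prod hB)]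
    simp [Set.mk_preimage_prod, hempty, Measure.restrict_eq_self _ hBΩ]
  · have hS : MeasurableSet {w : (ℝ × ℝ) × (ℝ × ℝ) | ¬ w.1.1 ≤ w.1.2 ∨ ¬ w.2.1 ≤ w.2.2} := by
      measurability
    have hnull : ∀ ρ : Measure (ℝ × ℝ), ρ.restrict Omega {z | z.2 < z.1} = 0 := fun ρ ↦ by
      rw [Measure.restrict_apply' measurableSet_Omega,
        Set.eq_empty_of_forall_notMem (s := {z | z.2 < z.1} ∩ Omega) fun z hz ↦ lt_asymm hz.1 hz.2,
        measure_empty]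
    rw [diagPlan, Measure.add_apply, Measure.map_apply (by fun_prop) hS,
      Measure.map_apply (by fun_prop) hS]
    simpa [diagProj] using ⟨hnull μ, hnull ν⟩

lemma FG_one_ne_top {μ ν : Measure (ℝ × ℝ)}
    (hμ : ∫⁻ z, ENNReal.ofReal ((z.2 - z.1) / √2) ∂μ < ⊤)
    (hν : ∫⁻ z, ENNReal.ofReal ((z.2 - z.1) / √2) ∂ν < ⊤) : FG 1 μ ν ≠ ⊤ := by
  have hpers : ∀ ρ : Measure (ℝ × ℝ), ∫⁻ z in Omega, ENNReal.ofReal (|z.2 - z.1| / √2) ∂ρ ≤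
      ∫⁻ z, ENNReal.ofReal ((z.2 - z.1) / √2) ∂ρ := fun ρ ↦
    (setLIntegral_congr_fun measurableSet_Omega fun z hz ↦ by
      rw [abs_of_pos (sub_pos.2 hz)]).trans_le (setLIntegral_le_lintegral _ _)
  refine ne_top_of_le_ne_top ?_ ((FG_one μ ν).trans_le (iInf₂_le _ (diagPlan_mem_Adm μ ν)))
  rw [FGcost_one, diagPlan, lintegral_add_measure, lintegral_map (by fun_prop) (by fun_prop),
    lintegral_map (by fun_prop) (by fun_prop)]
  simp only [planeDist_comm (diagProj _), planeDist_diagProj]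
  exact ENNReal.add_ne_top.2
    ⟨ne_top_of_le_ne_top hμ.ne (hpers μ), ne_top_of_le_ne_top hν.ne (hpers ν)⟩

end

theorem stmt10_general (μ ν : Measure (ℝ × ℝ))
    (hμpers : ∫⁻ z, ENNReal.ofReal ((z.2 - z.1) / Real.sqrt 2) ∂μ < ⊤)
    (hνpers : ∫⁻ z, ENNReal.ofReal ((z.2 - z.1) / Real.sqrt 2) ∂ν < ⊤) :
    (1 / Real.sqrt 2) *
      ∫ t : ℝ, (FG 1 (Measure.map (projGeo t) (normalizePM μ))
        (Measure.map (projGeo t) (normalizePM ν))).toReal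
      ≤ 3 * (FG 1 μ ν).toReal := by
  have hFG := FG_one_ne_top hμpers hνpers
  have key := (ofReal_integral_toReal_le_lintegral _ _).trans (lintegral_FG_slice_le hμpers hνpers)
  rw [ENNReal.ofReal_le_iff_le_toReal (ENNReal.mul_ne_top ENNReal.ofReal_ne_top hFG),
    ENNReal.toReal_mul, ENNReal.toReal_ofReal (by positivity)] at key
  calc (1 / √2) * ∫ t, (FG 1 ((normalizePM μ).map (projGeo t))
        ((normalizePM ν).map (projGeo t))).toReal
      ≤ (1 / √2) * (3 * √2 * (FG 1 μ ν).toReal) := by gcongr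
    _ = 3 * (FG 1 μ ν).toReal := by field_simp

/-- Stability for `p = 1`: for all persistence measures `μ, ν ∈ M¹(Ω)` (Radon measures on the
open half-plane with finite `1`-persistence), the Sliced Figalli–Gigli distance
`SFG₁(μ,ν) = (1/√2) ∫_ℝ FG₁(π_t#μ̃, π_t#ν̃) dt` satisfies `SFG₁(μ,ν) ≤ 3·FG₁(μ,ν)`. -/
theorem stmt10 (μ ν : Measure (ℝ × ℝ))
    (hμΩ : μ {z : ℝ × ℝ | ¬ z.1 < z.2} = 0) (hνΩ : ν {z : ℝ × ℝ | ¬ z.1 < z.2} = 0)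
    (hμpers : ∫⁻ z, ENNReal.ofReal ((z.2 - z.1) / Real.sqrt 2) ∂μ < ⊤)
    (hνpers : ∫⁻ z, ENNReal.ofReal ((z.2 - z.1) / Real.sqrt 2) ∂ν < ⊤) :
    (1 / Real.sqrt 2) *
      ∫ t : ℝ, (FG 1 (Measure.map (projGeo t) (normalizePM μ))
        (Measure.map (projGeo t) (normalizePM ν))).toReal
      ≤ 3 * (FG 1 μ ν).toReal :=
  stmt10_general μ ν hμpers hνpers
end

section
/- Let μ_n = Σ_{k=0}^{⌈n^p⌉} δ_{(k√2/n, (k+1)√2/n)} and ν_n = Σ_{k=0}^{⌈n^p⌉} δ_{((k+1/2)√2/n, (k+3/2)√2/n)}. Then FG_p(μ_n, ν_n)^p = Σ_{k=0}^{⌈n^p⌉} (1/n^p) ≥ 1: matching each point of μ_n to the corresponding shifted point of ν_n at distance 1/n (per-point cost n^{−p}) over more than n^p points gives total cost at least 1. -/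
/-!
Matching the `k`-th point of `μ_n` with the `k`-th point of `ν_n` is admissible and costs
`(1/n)^p` per point. Conversely, every point of `ν_n` differs from every point of `μ_n` by an odd
multiple of `(√2/(2n))(1,1)`, and every point of `μ_n` has persistence `√2/n`, so all of `ν_n` and
the whole diagonal lie at distance at least `1/n` from `μ_n`. An admissible plan must send all the
mass of `μ_n` into `ν_n` or onto the diagonal, hence costs at least `n^{-p}` per point of `μ_n`.
There are `⌈n^p⌉ + 1 > n^p` points.
-/

open MeasureTheory

/-- `FG_p(μ,ν)^p`, the `p`-th power of the Figalli–Gigli distance. -/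
noncomputable def FGpow (p : ℝ) (μ ν : Measure (ℝ × ℝ)) : ENNReal :=
  ⨅ γ ∈ Adm μ ν, FGcost p γ

open Finset

noncomputable def groundDist (x y : ℝ × ℝ) : ℝ :=
  Real.sqrt ((x.1 - y.1) ^ 2 + (x.2 - y.2) ^ 2)

lemma FGcost_eq_lintegral_groundDist (p : ℝ) (γ : Measure ((ℝ × ℝ) × (ℝ × ℝ))) :
    FGcost p γ = ∫⁻ w, ENNReal.ofReal (groundDist w.1 w.2 ^ p) ∂γ := rfl

lemma groundDist_add_diag (x : ℝ × ℝ) (u : ℝ) :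
    groundDist x (x.1 + u, x.2 + u) = Real.sqrt 2 * |u| := by
  rw [groundDist, ← Real.sqrt_sq_eq_abs, ← Real.sqrt_mul zero_le_two]
  congr 1
  ring

lemma div_sqrt_two_le_groundDist_diag (x : ℝ × ℝ) (t : ℝ) :
    (x.2 - x.1) / Real.sqrt 2 ≤ groundDist x (t, t) := by
  apply Real.le_sqrt_of_sq_le
  rw [div_pow, Real.sq_sqrt zero_le_two]
  nlinarith [sq_nonneg (x.1 + x.2 - 2 * t)]

lemma sum_dirac_apply_of_forall_mem {ι α : Type*} [MeasurableSpace α]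
    [MeasurableSingletonClass α] (s : Finset ι) (x : ι → α) {A : Set α}
    (hA : ∀ k ∈ s, x k ∈ A) : (∑ k ∈ s, Measure.dirac (x k)) A = #s := by
  rw [Measure.finsetSum_apply, Finset.card_eq_sum_ones, Nat.cast_sum, Nat.cast_one]
  exact Finset.sum_congr rfl fun k hk => Measure.dirac_apply_of_mem (hA k hk)

lemma sum_dirac_apply_of_forall_notMem {ι α : Type*} [MeasurableSpace α]
    [MeasurableSingletonClass α] (s : Finset ι) (x : ι → α) {A : Set α}
    (hA : ∀ k ∈ s, x k ∉ A) : (∑ k ∈ s, Measure.dirac (x k)) A = 0 := by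
  rw [Measure.finsetSum_apply]
  exact Finset.sum_eq_zero fun k hk => by simp [Measure.dirac_apply, hA k hk]

section Matching

variable {ι : Type*} (s : Finset ι) (x y : ι → ℝ × ℝ)

lemma sum_dirac_prod_mem_Adm (hx : ∀ k ∈ s, (x k).1 ≤ (x k).2)
    (hy : ∀ k ∈ s, (y k).1 ≤ (y k).2) :
    ∑ k ∈ s, Measure.dirac (x k, y k) ∈
      Adm (∑ k ∈ s, Measure.dirac (x k)) (∑ k ∈ s, Measure.dirac (y k)) := by
  refine ⟨fun A _ _ => ?_, fun B _ _ => ?_, ?_⟩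
  · simp only [Measure.finsetSum_apply, Measure.dirac_apply]
    refine Finset.sum_congr rfl fun k _ => ?_
    by_cases h : x k ∈ A <;> simp [h]
  · simp only [Measure.finsetSum_apply, Measure.dirac_apply]
    refine Finset.sum_congr rfl fun k _ => ?_
    by_cases h : y k ∈ B <;> simp [h]
  · refine sum_dirac_apply_of_forall_notMem s _ fun k hk => ?_
    simp [hx k hk, hy k hk]

lemma FGcost_sum_dirac_prod (p : ℝ) :
    FGcost p (∑ k ∈ s, Measure.dirac (x k, y k)) =
      ∑ k ∈ s, ENNReal.ofReal (groundDist (x k) (y k) ^ p) := by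
  rw [FGcost_eq_lintegral_groundDist, lintegral_finsetSum_measure]
  simp only [lintegral_dirac]

end Matching

/-- An admissible plan sends almost all mass leaving `X` into `Y` or onto the diagonal, since `ν`
puts no mass on `Ω \ Y`. -/
lemma mul_le_FGcost_of_mem_Adm {p : ℝ} {μ ν : Measure (ℝ × ℝ)}
    {γ : Measure ((ℝ × ℝ) × (ℝ × ℝ))} (hγ : γ ∈ Adm μ ν) {X Y : Set (ℝ × ℝ)}
    (hX : MeasurableSet X) (hXΩ : X ⊆ Omega) (hY : MeasurableSet Y) (hνY : ν (Omega \ Y) = 0)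
    {c : ENNReal} (hc : ∀ x ∈ X, ∀ y : ℝ × ℝ, (y ∈ Y ∨ y.1 = y.2) →
      c ≤ ENNReal.ofReal (groundDist x y ^ p)) :
    μ X * c ≤ FGcost p γ := by
  obtain ⟨hγμ, hγν, hγdiag⟩ := hγ
  have hΩ : MeasurableSet Omega := (isOpen_lt continuous_fst continuous_snd).measurableSet
  have hγY : γ (Set.univ ×ˢ (Omega \ Y)) = 0 := by
    rw [hγν _ (hΩ.diff hY) Set.sdiff_subset, hνY]
  have hbound : ∀ᵐ w ∂γ, (X ×ˢ Set.univ).indicator (fun _ => c) w ≤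
      ENNReal.ofReal (groundDist w.1 w.2 ^ p) := by
    filter_upwards [measure_eq_zero_iff_ae_notMem.mp hγY,
      measure_eq_zero_iff_ae_notMem.mp hγdiag] with w hwY hwdiag
    by_cases hwX : w.1 ∈ X
    · rw [Set.indicator_of_mem (Set.mk_mem_prod hwX (Set.mem_univ _))]
      refine hc _ hwX _ ?_
      by_contra! hw
      simp only [not_or, not_not] at hwdiag
      exact hwY ⟨Set.mem_univ _, lt_of_le_of_ne hwdiag.2 hw.2, hw.1⟩
    · rw [Set.indicator_of_notMem fun h => hwX h.1]
      exact zero_le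
  calc μ X * c = ∫⁻ w, (X ×ˢ Set.univ).indicator (fun _ => c) w ∂γ := by
        rw [lintegral_indicator (hX.prod MeasurableSet.univ), setLIntegral_const,
          hγμ X hX hXΩ, mul_comm]
    _ ≤ FGcost p γ := lintegral_mono_ae hbound

lemma FGpow_le_FGcost {p : ℝ} {μ ν : Measure (ℝ × ℝ)} {γ : Measure ((ℝ × ℝ) × (ℝ × ℝ))}
    (hγ : γ ∈ Adm μ ν) : FGpow p μ ν ≤ FGcost p γ :=
  iInf₂_le γ hγ

lemma le_FGpow {p : ℝ} {μ ν : Measure (ℝ × ℝ)} {c : ENNReal}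
    (h : ∀ γ ∈ Adm μ ν, c ≤ FGcost p γ) : c ≤ FGpow p μ ν :=
  le_iInf₂ h

section Staircase

variable (r : ℝ)

noncomputable def stair (k : ℕ) : ℝ × ℝ :=
  ((k : ℝ) * Real.sqrt 2 / r, ((k : ℝ) + 1) * Real.sqrt 2 / r)

noncomputable def stairShift (k : ℕ) : ℝ × ℝ :=
  (((k : ℝ) + 1 / 2) * Real.sqrt 2 / r, ((k : ℝ) + 3 / 2) * Real.sqrt 2 / r)

variable {r}

lemma stair_mem_Omega (hr : 0 < r) (k : ℕ) : stair r k ∈ Omega := by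
  have := Real.sqrt_pos.mpr (two_pos (α := ℝ))
  simp only [stair, Omega, Set.mem_ofPred_eq]
  gcongr
  linarith

lemma stairShift_mem_Omega (hr : 0 < r) (k : ℕ) : stairShift r k ∈ Omega := by
  have := Real.sqrt_pos.mpr (two_pos (α := ℝ))
  simp only [stairShift, Omega, Set.mem_ofPred_eq]
  gcongr
  linarith

lemma groundDist_stair_stairShift (hr : 0 < r) (k j : ℕ) :
    groundDist (stair r k) (stairShift r j) = 2 * |(j : ℝ) - k + 1 / 2| / r := by
  have hshift : stairShift r j = ((stair r k).1 + ((j : ℝ) - k + 1 / 2) * Real.sqrt 2 / r,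
      (stair r k).2 + ((j : ℝ) - k + 1 / 2) * Real.sqrt 2 / r) := by
    simp only [stair, stairShift, Prod.mk.injEq]
    constructor <;> ring
  have hs : Real.sqrt 2 * Real.sqrt 2 = 2 := Real.mul_self_sqrt zero_le_two
  rw [hshift, groundDist_add_diag, abs_div, abs_mul, abs_of_pos hr,
    abs_of_pos (Real.sqrt_pos.mpr two_pos)]
  linear_combination (|(j : ℝ) - k + 1 / 2| / r) * hs

lemma half_le_abs_intCast_add_half (m : ℤ) : 1 / 2 ≤ |(m : ℝ) + 1 / 2| := by
  rcases le_or_gt 0 m with hm | hm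
  · rw [abs_of_nonneg (by positivity)]
    linarith [(Int.cast_nonneg hm : (0 : ℝ) ≤ m)]
  · have : (m : ℝ) ≤ -1 := by exact_mod_cast Int.le_sub_one_of_lt hm
    rw [abs_of_neg (by linarith)]
    linarith

lemma groundDist_stair_stairShift_self (hr : 0 < r) (k : ℕ) :
    groundDist (stair r k) (stairShift r k) = 1 / r := by
  rw [groundDist_stair_stairShift hr, sub_self, zero_add, abs_of_pos one_half_pos]
  ring

lemma one_div_le_groundDist_stair_stairShift (hr : 0 < r) (k j : ℕ) :
    1 / r ≤ groundDist (stair r k) (stairShift r j) := by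
  rw [groundDist_stair_stairShift hr]
  have := half_le_abs_intCast_add_half ((j : ℤ) - k)
  push_cast at this
  gcongr
  linarith

lemma one_div_le_groundDist_stair_diag (hr : 0 < r) (k : ℕ) (t : ℝ) :
    1 / r ≤ groundDist (stair r k) (t, t) := by
  refine le_of_eq_of_le ?_ (div_sqrt_two_le_groundDist_diag _ t)
  have : Real.sqrt 2 ≠ 0 := (Real.sqrt_pos.mpr two_pos).ne'
  simp only [stair]
  field_simp
  ring

lemma FGpow_stair_stairShift {p : ℝ} (hp : 0 ≤ p) (hr : 0 < r) (s : Finset ℕ) :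
    FGpow p (∑ k ∈ s, Measure.dirac (stair r k)) (∑ k ∈ s, Measure.dirac (stairShift r k)) =
      ∑ _k ∈ s, ENNReal.ofReal ((1 / r) ^ p) := by
  apply le_antisymm
  · calc _ ≤ FGcost p (∑ k ∈ s, Measure.dirac (stair r k, stairShift r k)) :=
          FGpow_le_FGcost <| sum_dirac_prod_mem_Adm s _ _ (fun k _ => (stair_mem_Omega hr k).le)
            (fun k _ => (stairShift_mem_Omega hr k).le)
      _ = _ := by
          simp only [FGcost_sum_dirac_prod, groundDist_stair_stairShift_self hr]
  · refine le_FGpow fun γ hγ => ?_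
    have hX := sum_dirac_apply_of_forall_mem s (stair r) fun k hk =>
      Set.mem_image_of_mem (stair r) (Finset.mem_coe.mpr hk)
    have hνY := sum_dirac_apply_of_forall_notMem s (stairShift r) (A := Omega \ stairShift r '' s)
      fun k hk h => h.2 (Set.mem_image_of_mem _ (Finset.mem_coe.mpr hk))
    rw [Finset.sum_const, nsmul_eq_mul, ← hX]
    refine mul_le_FGcost_of_mem_Adm hγ ((s.finite_toSet.image _).measurableSet)
      (by rintro _ ⟨k, -, rfl⟩; exact stair_mem_Omega hr k)
      ((s.finite_toSet.image _).measurableSet) hνY ?_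
    rintro _ ⟨k, -, rfl⟩ y hy
    gcongr
    rcases hy with ⟨j, -, rfl⟩ | hdiag
    · exact one_div_le_groundDist_stair_stairShift hr k j
    · rw [show y = (y.1, y.1) from Prod.ext rfl hdiag.symm]
      exact one_div_le_groundDist_stair_diag hr k y.1

end Staircase

lemma one_le_sum_range_ceil_add_one {a : ℝ} (ha : 0 < a) :
    (1 : ENNReal) ≤ ∑ _k ∈ range (⌈a⌉₊ + 1), ENNReal.ofReal (1 / a) := by
  rw [Finset.sum_const, Finset.card_range, nsmul_eq_mul, ← ENNReal.ofReal_natCast,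
    ← ENNReal.ofReal_mul (Nat.cast_nonneg _), ENNReal.one_le_ofReal, ← div_eq_mul_one_div,
    one_le_div ha]
  push_cast
  linarith [Nat.le_ceil a]

/-- For the staircase diagrams `μ_n = Σ_{k=0}^{⌈n^p⌉} δ_{(k√2/n,(k+1)√2/n)}` and
`ν_n = Σ_{k=0}^{⌈n^p⌉} δ_{((k+1/2)√2/n,(k+3/2)√2/n)}`, one has
`FG_p(μ_n,ν_n)^p = Σ_{k=0}^{⌈n^p⌉} 1/n^p ≥ 1`. -/
theorem stmt17 (p : ℝ) (hp : 1 ≤ p) (n : ℕ) (hn : 1 ≤ n) :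
    FGpow p
        (∑ k ∈ Finset.range (⌈(n : ℝ) ^ p⌉₊ + 1),
          Measure.dirac (((k : ℝ) * Real.sqrt 2 / n, ((k : ℝ) + 1) * Real.sqrt 2 / n) : ℝ × ℝ))
        (∑ k ∈ Finset.range (⌈(n : ℝ) ^ p⌉₊ + 1),
          Measure.dirac ((((k : ℝ) + 1 / 2) * Real.sqrt 2 / n,
            ((k : ℝ) + 3 / 2) * Real.sqrt 2 / n) : ℝ × ℝ))
      = ∑ k ∈ Finset.range (⌈(n : ℝ) ^ p⌉₊ + 1), ENNReal.ofReal (1 / (n : ℝ) ^ p) ∧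
    (1 : ENNReal) ≤ ∑ k ∈ Finset.range (⌈(n : ℝ) ^ p⌉₊ + 1), ENNReal.ofReal (1 / (n : ℝ) ^ p) := by
  have hn0 : (0 : ℝ) < n := by exact_mod_cast hn
  refine ⟨?_, one_le_sum_range_ceil_add_one (Real.rpow_pos_of_pos hn0 p)⟩
  rw [show (1 : ℝ) / n ^ p = (1 / n) ^ p by rw [Real.div_rpow zero_le_one hn0.le, Real.one_rpow]]
  exact FGpow_stair_stairShift (by linarith) hn0 _
end

section
/- Let η be a finite signed Borel measure on ℝ and u > 0. If η is invariant under translation by 2u (i.e. τ_{2u} # η = η where τ_{2u}(w) = w + 2u), then η = 0. -/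
/-!
If `s ⊆ [a, a + c)` then the translates `s - n c`, `n ∈ ℕ`, are pairwise disjoint and, by
invariance, all have measure `μ s`. Countable additivity makes `∑ₙ μ s` summable, so `μ s = 0`.
Cutting an arbitrary measurable set along the tiling `ℝ = ⋃ₖ [k c, (k + 1) c)` gives `μ = 0`.
-/

open MeasureTheory Set Function

theorem pairwise_disjoint_preimage_add_nsmul_of_subset_Ico {a c : ℝ} {s : Set ℝ}
    (hs : s ⊆ Ico a (a + c)) : Pairwise (Disjoint on fun n : ℕ => (· + n • c) ⁻¹' s) := by
  refine (pairwise_disjoint_on _).2 fun m n hmn => disjoint_left.2 fun x hxm hxn => ?_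
  obtain ⟨k, rfl⟩ := Nat.exists_eq_add_of_lt hmn
  have hm := hs hxm
  have hn := hs hxn
  simp only [mem_Ico, nsmul_eq_mul, Nat.cast_add, Nat.cast_one] at hm hn
  have hk : (0 : ℝ) ≤ k * c := mul_nonneg k.cast_nonneg (by linarith)
  linarith

namespace MeasureTheory.VectorMeasure

variable {α M : Type*} [MeasurableSpace α]

theorem apply_preimage_iterate_eq_of_map_eq [AddCommMonoid M] [TopologicalSpace M]
    {μ : VectorMeasure α M} {f : α → α}
    (hf : Measurable f) (hμ : μ.map f = μ) {s : Set α} (hs : MeasurableSet s) (n : ℕ) :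
    μ (f^[n] ⁻¹' s) = μ s := by
  induction n with
  | zero => rfl
  | succ n ih =>
    rw [iterate_succ, preimage_comp, ← map_apply μ hf (hf.iterate n hs), hμ, ih]

theorem apply_eq_zero_of_pairwise_disjoint_preimage_iterate [AddCommGroup M] [TopologicalSpace M]
    [IsTopologicalAddGroup M] [T2Space M] {μ : VectorMeasure α M} {f : α → α}
    (hf : Measurable f) (hμ : μ.map f = μ) {s : Set α} (hs : MeasurableSet s)
    (hdisj : Pairwise (Disjoint on fun n : ℕ => f^[n] ⁻¹' s)) : μ s = 0 := by
  have hsum : HasSum (fun _ : ℕ => μ s) (μ (⋃ n, f^[n] ⁻¹' s)) := by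
    simpa only [apply_preimage_iterate_eq_of_map_eq hf hμ hs] using
      hasSum_of_disjoint_iUnion (v := μ) (fun n => hf.iterate n hs) hdisj
  exact tendsto_const_nhds_iff.mp hsum.summable.tendsto_atTop_zero

theorem eq_zero_of_map_add_const_eq [AddCommGroup M] [TopologicalSpace M]
    [IsTopologicalAddGroup M] [T2Space M] {μ : VectorMeasure ℝ M} {c : ℝ} (hc : 0 < c)
    (hμ : μ.map (· + c) = μ) : μ = 0 := by
  ext s hs
  have hpiece : ∀ k : ℤ, μ (s ∩ Ico (k • c) ((k + 1) • c)) = 0 := fun k => by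
    refine apply_eq_zero_of_pairwise_disjoint_preimage_iterate (measurable_add_const c) hμ
      (hs.inter measurableSet_Ico) ?_
    simp only [add_right_iterate]
    exact pairwise_disjoint_preimage_add_nsmul_of_subset_Ico
      (inter_subset_right.trans_eq (by rw [add_smul, one_smul]))
  rw [← inter_univ s, ← iUnion_Ico_zsmul hc, inter_iUnion, zero_apply,
    of_disjoint_iUnion (fun k => hs.inter measurableSet_Ico)
      ((pairwise_disjoint_Ico_zsmul c).mono fun _ _ h =>
        h.mono inter_subset_right inter_subset_right)]
  simp only [hpiece, tsum_zero]

end MeasureTheory.VectorMeasure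

/-- A finite signed Borel measure on `ℝ` that is invariant under translation by `2u`
for some `u > 0` must vanish. -/
theorem stmt19 (η : SignedMeasure ℝ) (u : ℝ) (hu : 0 < u)
    (hinv : η.map (fun w : ℝ => w + 2 * u) = η) : η = 0 :=
  VectorMeasure.eq_zero_of_map_add_const_eq (by positivity) hinv
end
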